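/- In the unbounded forecasting game, Reality can strongly comply with the event: ∑_n v_n/n² < ∞ if and only if (1/n)∑_{i=1}^n (x_i - m_i) → 0. -/

import Mathlib

/-!
Reality plays `x n = m n + e n`, where the deviation `e n` is either `0` or a spike `±(n + 1)` of
sign opposite to Skeptic's `M n`, so that `M n * e n ≤ 0`. A spike is played only if it leaves the
capital `K` at most `1`, if the number of spikes, this one included, stays within the budget
`∑_{k<n} v k / (k + 1)²`, and if the partial sum `S n` of the deviations satisfies
`2 |S n| ≤ n + 1`; without a spike the capital drops by `V n * v n`. Hence `K` never exceeds `1`.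

If `∑ v n / (n + 1)²` converges, the budget allows only finitely many spikes, so `S n` is
eventually constant and `S n / n → 0`. Conversely, a spike at `n` makes `|S (n + 1)| ≥ (n + 1) / 2`,
so `S n / n → 0` forces finitely many spikes. Were the series divergent, the budget and size
conditions would then eventually hold, so the capital condition would fail:
`V n ((n + 1)² - v n) > 1 - K n`. The gap `1 - K n`, which stays in `[0, 1]` while Skeptic is
solvent, would then grow by at least `(1 - K n) v n / (n + 1)²` per round, which makes the series
converge (if the gap stays `0`, then `v n = 0` eventually).
-/

open Filter Finset

/-- Capital process in the unbounded forecasting game, initial capital 1. -/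
def capitalU (m v M V x : ℕ → ℝ) : ℕ → ℝ
  | 0 => 1
  | n + 1 => capitalU m v M V x n + M n * (x n - m n) +
      V n * ((x n - m n) ^ 2 - v n)

theorem finite_of_forall_count_le {p : ℕ → Prop} [DecidablePred p] {C : ℕ}
    (h : ∀ n, Nat.count p n ≤ C) : (Set.ofPred p).Finite := by
  by_contra hinf
  have := h (Nat.nth p (C + 1))
  rw [Nat.count_nth_of_infinite hinf] at this
  omega

theorem sum_range_eq_of_forall_ge_eq_zero {A : Type*} [AddCommMonoid A] {e : ℕ → A} {N : ℕ}
    (h : ∀ k ≥ N, e k = 0) {n : ℕ} (hn : N ≤ n) :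
    ∑ k ∈ range n, e k = ∑ k ∈ range N, e k :=
  (sum_subset (range_mono hn) fun k _ hk => h k (by simpa using hk)).symm

theorem tendsto_sum_range_div_of_eventually_eq_zero {e : ℕ → ℝ} (h : ∀ᶠ n in atTop, e n = 0) :
    Tendsto (fun n => (∑ k ∈ range n, e k) / (n : ℝ)) atTop (nhds 0) := by
  obtain ⟨N, hN⟩ := eventually_atTop.1 h
  refine (tendsto_const_div_atTop_nhds_zero_nat (∑ k ∈ range N, e k)).congr' ?_
  filter_upwards [eventually_ge_atTop N] with n hn
  rw [sum_range_eq_of_forall_ge_eq_zero hN hn]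

theorem summable_of_eventually_add_mul_le {g p : ℕ → ℝ} {β C : ℝ} (hβ : 0 < β)
    (hp : ∀ n, 0 ≤ p n) (hgC : ∀ n, g n ≤ C) (hstep : ∀ᶠ n in atTop, g n + β * p n ≤ g (n + 1)) :
    Summable p := by
  obtain ⟨N, hN⟩ := eventually_atTop.1 hstep
  have hsum : ∀ n, g N + β * ∑ k ∈ range n, p (k + N) ≤ g (n + N) := by
    intro n
    induction n with
    | zero => simp
    | succ n ih =>
      rw [sum_range_succ, Nat.add_right_comm, mul_add]
      linarith [hN (n + N) (Nat.le_add_left N n)]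
  refine (summable_nat_add_iff N).1 (summable_of_sum_range_le (c := (C - g N) / β)
    (fun n => hp _) fun n => ?_)
  rw [le_div_iff₀ hβ]
  linarith [hsum n, hgC (n + N)]

theorem summable_of_gap {g v V : ℕ → ℝ} {C : ℝ} (hv : ∀ n, 0 ≤ v n) (hV : ∀ n, 0 ≤ V n)
    (hg0 : ∀ n, 0 ≤ g n) (hgC : ∀ n, g n ≤ C)
    (hrec : ∀ᶠ n in atTop, g (n + 1) = g n + V n * v n)
    (hlt : ∀ᶠ n in atTop, g n < V n * (((n : ℝ) + 1) ^ 2 - v n)) :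
    Summable fun n => v n / ((n : ℝ) + 1) ^ 2 := by
  have hp : ∀ n, 0 ≤ v n / ((n : ℝ) + 1) ^ 2 := fun n => div_nonneg (hv n) (by positivity)
  obtain ⟨N, hN⟩ := eventually_atTop.1 (hrec.and hlt)
  by_cases hpos : ∃ n₀ ≥ N, 0 < g n₀
  · obtain ⟨n₀, hn₀, hβ⟩ := hpos
    have hmono : ∀ n ≥ n₀, g n₀ ≤ g n := fun n hn => by
      induction n, hn using Nat.le_induction with
      | base => exact le_rfl
      | succ n hn ih => linarith [(hN n (hn₀.trans hn)).1, mul_nonneg (hV n) (hv n)]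
    refine summable_of_eventually_add_mul_le hβ hp hgC (eventually_atTop.2 ⟨n₀, fun n hn => ?_⟩)
    obtain ⟨hrec_n, hlt_n⟩ := hN n (hn₀.trans hn)
    have hβV : g n₀ ≤ V n * ((n : ℝ) + 1) ^ 2 := by
      linarith [hmono n hn, mul_nonneg (hV n) (hv n)]
    have : g n₀ * (v n / ((n : ℝ) + 1) ^ 2) ≤ V n * v n := by
      rw [mul_div_assoc', div_le_iff₀ (by positivity)]
      nlinarith [mul_le_mul_of_nonneg_right hβV (hv n)]
    linarith
  · push Not at hpos
    refine summable_of_eventually_add_mul_le one_pos hp hgC (eventually_atTop.2 ⟨N, fun n hn => ?_⟩)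
    obtain ⟨hrec_n, hlt_n⟩ := hN n hn
    have hgn : g n = 0 := le_antisymm (hpos n hn) (hg0 n)
    have hgn' : g (n + 1) = 0 := le_antisymm (hpos (n + 1) (by omega)) (hg0 _)
    have hvn : v n = 0 := by
      rcases mul_eq_zero.1 (by linarith : V n * v n = 0) with h | h
      · simp [h, hgn] at hlt_n
      · exact h
    simp [hvn, hgn, hgn']

theorem capitalU_congr {m v M V x v' M' V' x' : ℕ → ℝ} {n : ℕ}
    (hv : ∀ k < n, v k = v' k) (hM : ∀ k < n, M k = M' k) (hV : ∀ k < n, V k = V' k)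
    (hx : ∀ k < n, x k = x' k) :
    capitalU m v M V x n = capitalU m v' M' V' x' n := by
  induction n with
  | zero => rfl
  | succ n ih =>
    simp only [capitalU, hv n n.lt_succ_self, hM n n.lt_succ_self, hV n n.lt_succ_self,
      hx n n.lt_succ_self, ih (fun k hk => hv k (by omega)) (fun k hk => hM k (by omega))
        (fun k hk => hV k (by omega)) (fun k hk => hx k (by omega))]

theorem capitalU_eq_capitalU_zero_sub (m v M V x : ℕ → ℝ) (n : ℕ) :
    capitalU m v M V x n = capitalU 0 v M V (x - m) n := by
  induction n with
  | zero => rfl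
  | succ n ih => simp only [capitalU, ih, Pi.sub_apply, Pi.zero_apply, sub_zero]

theorem capitalU_zero_succ (v M V e : ℕ → ℝ) (n : ℕ) :
    capitalU 0 v M V e (n + 1) = capitalU 0 v M V e n + M n * e n + V n * (e n ^ 2 - v n) := by
  simp only [capitalU, Pi.zero_apply, sub_zero]

noncomputable def counterSpike (M : ℕ → ℝ) (n : ℕ) : ℝ :=
  if 0 < M n then -((n : ℝ) + 1) else (n : ℝ) + 1

theorem mul_counterSpike_nonpos (M : ℕ → ℝ) (n : ℕ) : M n * counterSpike M n ≤ 0 := by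
  unfold counterSpike
  split_ifs <;> nlinarith

theorem counterSpike_sq (M : ℕ → ℝ) (n : ℕ) : counterSpike M n ^ 2 = ((n : ℝ) + 1) ^ 2 := by
  unfold counterSpike
  split_ifs <;> ring

theorem abs_counterSpike (M : ℕ → ℝ) (n : ℕ) : |counterSpike M n| = (n : ℝ) + 1 := by
  rw [← sq_eq_sq₀ (abs_nonneg _) (by positivity), sq_abs, counterSpike_sq]

theorem counterSpike_ne_zero (M : ℕ → ℝ) (n : ℕ) : counterSpike M n ≠ 0 := by
  rw [← abs_pos, abs_counterSpike]
  positivity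

def SpikeCond (v M V e : ℕ → ℝ) (n : ℕ) : Prop :=
  (Nat.count (fun k => e k ≠ 0) n : ℝ) + 1 ≤ ∑ k ∈ range n, v k / ((k : ℝ) + 1) ^ 2 ∧
    2 * |∑ k ∈ range n, e k| ≤ (n : ℝ) + 1 ∧
    capitalU 0 v M V e n + M n * counterSpike M n + V n * (counterSpike M n ^ 2 - v n) ≤ 1

theorem spikeCond_congr {v M V e v' M' V' e' : ℕ → ℝ} {n : ℕ}
    (hv : ∀ k ≤ n, v k = v' k) (hM : ∀ k ≤ n, M k = M' k) (hV : ∀ k ≤ n, V k = V' k)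
    (he : ∀ k < n, e k = e' k) :
    SpikeCond v M V e n ↔ SpikeCond v' M' V' e' n := by
  have hcount : Nat.count (fun k => e k ≠ 0) n = Nat.count (fun k => e' k ≠ 0) n := by
    simp only [Nat.count_eq_card_filter_range]
    exact congrArg card (filter_congr fun k hk => by rw [he k (mem_range.1 hk)])
  have hsum : ∑ k ∈ range n, e k = ∑ k ∈ range n, e' k :=
    sum_congr rfl fun k hk => he k (mem_range.1 hk)
  have hvsum : ∑ k ∈ range n, v k / ((k : ℝ) + 1) ^ 2 = ∑ k ∈ range n, v' k / ((k : ℝ) + 1) ^ 2 :=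
    sum_congr rfl fun k hk => by rw [hv k (mem_range.1 hk).le]
  have hcap : capitalU 0 v M V e n = capitalU 0 v' M' V' e' n :=
    capitalU_congr (fun k hk => hv k hk.le) (fun k hk => hM k hk.le) (fun k hk => hV k hk.le) he
  have hspike : counterSpike M n = counterSpike M' n := by
    simp only [counterSpike, hM n le_rfl]
  simp only [SpikeCond, hcount, hsum, hvsum, hcap, hspike, hv n le_rfl, hM n le_rfl, hV n le_rfl]

-- The restriction to `k < n` only serves termination; `realityDev_eq` removes it.
noncomputable def realityDev (v M V : ℕ → ℝ) (n : ℕ) : ℝ :=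
  open Classical in
  if SpikeCond v M V (fun k => if _h : k < n then realityDev v M V k else 0) n then counterSpike M n
  else 0
termination_by n

open Classical in
theorem realityDev_eq (v M V : ℕ → ℝ) (n : ℕ) :
    realityDev v M V n = if SpikeCond v M V (realityDev v M V) n then counterSpike M n else 0 := by
  rw [realityDev]
  exact if_congr (spikeCond_congr (fun _ _ => rfl) (fun _ _ => rfl) (fun _ _ => rfl)
    fun k hk => dif_pos hk) rfl rfl

section realityDev

variable {v M V : ℕ → ℝ} {n : ℕ}

theorem realityDev_of_spikeCond (h : SpikeCond v M V (realityDev v M V) n) :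
    realityDev v M V n = counterSpike M n := by
  classical
  rw [realityDev_eq, if_pos h]

theorem realityDev_of_not_spikeCond (h : ¬SpikeCond v M V (realityDev v M V) n) :
    realityDev v M V n = 0 := by
  classical
  rw [realityDev_eq, if_neg h]

theorem realityDev_ne_zero_iff :
    realityDev v M V n ≠ 0 ↔ SpikeCond v M V (realityDev v M V) n :=
  ⟨fun h => by_contra fun hc => h (realityDev_of_not_spikeCond hc),
    fun h => realityDev_of_spikeCond h ▸ counterSpike_ne_zero M n⟩

theorem realityDev_congr {v' M' V' : ℕ → ℝ} (hv : ∀ k ≤ n, v k = v' k)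
    (hM : ∀ k ≤ n, M k = M' k) (hV : ∀ k ≤ n, V k = V' k) :
    realityDev v M V n = realityDev v' M' V' n := by
  classical
  induction n using Nat.strong_induction_on with
  | _ n ih =>
    have he : ∀ k < n, realityDev v M V k = realityDev v' M' V' k := fun k hk =>
      ih k hk (fun j hj => hv j (hj.trans hk.le)) (fun j hj => hM j (hj.trans hk.le))
        (fun j hj => hV j (hj.trans hk.le))
    rw [realityDev_eq, realityDev_eq, spikeCond_congr hv hM hV he]
    simp only [counterSpike, hM n le_rfl]

theorem capitalU_realityDev_le_one (hv : ∀ n, 0 ≤ v n) (hV : ∀ n, 0 ≤ V n) (n : ℕ) :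
    capitalU 0 v M V (realityDev v M V) n ≤ 1 := by
  induction n with
  | zero => exact le_rfl
  | succ n ih =>
    rw [capitalU_zero_succ]
    by_cases h : SpikeCond v M V (realityDev v M V) n
    · rw [realityDev_of_spikeCond h]
      exact h.2.2
    · rw [realityDev_of_not_spikeCond h]
      nlinarith [mul_nonneg (hV n) (hv n)]

theorem count_realityDev_le_tsum (hv : ∀ n, 0 ≤ v n)
    (hs : Summable fun n => v n / ((n : ℝ) + 1) ^ 2) (n : ℕ) :
    (Nat.count (fun k => realityDev v M V k ≠ 0) n : ℝ) ≤ ∑' k, v k / ((k : ℝ) + 1) ^ 2 := by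
  have hp : ∀ k, 0 ≤ v k / ((k : ℝ) + 1) ^ 2 := fun k => div_nonneg (hv k) (by positivity)
  induction n with
  | zero => simpa using tsum_nonneg hp
  | succ n ih =>
    rw [Nat.count_succ]
    split_ifs with h
    · push_cast
      linarith [(realityDev_ne_zero_iff.1 h).1, hs.sum_le_tsum (range n) fun k _ => hp k]
    · simpa using ih

theorem eventually_realityDev_eq_zero_of_summable (hv : ∀ n, 0 ≤ v n)
    (hs : Summable fun n => v n / ((n : ℝ) + 1) ^ 2) :
    ∀ᶠ n in atTop, realityDev v M V n = 0 :=
  Nat.cofinite_eq_atTop ▸ eventually_cofinite.2 (finite_of_forall_count_le fun n => Nat.cast_le.1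
    ((count_realityDev_le_tsum (M := M) (V := V) hv hs n).trans (Nat.le_ceil _)))

theorem eventually_sub_capitalU_lt_of_eventually_realityDev_eq_zero (hv : ∀ n, 0 ≤ v n)
    (hns : ¬Summable fun n => v n / ((n : ℝ) + 1) ^ 2)
    (h : ∀ᶠ n in atTop, realityDev v M V n = 0) :
    ∀ᶠ n in atTop,
      1 - capitalU 0 v M V (realityDev v M V) n < V n * (((n : ℝ) + 1) ^ 2 - v n) := by
  have hfin : (Set.ofPred fun k => realityDev v M V k ≠ 0).Finite :=
    eventually_cofinite.1 (Nat.cofinite_eq_atTop ▸ h)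
  have hbudget : ∀ᶠ n in atTop, (Nat.count (fun k => realityDev v M V k ≠ 0) n : ℝ) + 1 ≤
      ∑ k ∈ range n, v k / ((k : ℝ) + 1) ^ 2 := by
    filter_upwards [((not_summable_iff_tendsto_nat_atTop_of_nonneg fun k =>
      div_nonneg (hv k) (by positivity)).1 hns).eventually_ge_atTop ((#hfin.toFinset : ℝ) + 1)]
      with n hn
    linarith [(Nat.cast_le (α := ℝ)).2 (Nat.count_le_card hfin n)]
  obtain ⟨N, hN⟩ := eventually_atTop.1 h
  have hsmall : ∀ᶠ n in atTop, 2 * |∑ k ∈ range n, realityDev v M V k| ≤ (n : ℝ) + 1 := by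
    filter_upwards [eventually_ge_atTop N, tendsto_natCast_atTop_atTop.eventually_ge_atTop
      (2 * |∑ k ∈ range N, realityDev v M V k|)] with n hn hn'
    rw [sum_range_eq_of_forall_ge_eq_zero hN hn]
    linarith
  filter_upwards [h, hbudget, hsmall] with n hn h1 h2
  have hcost : 1 < capitalU 0 v M V (realityDev v M V) n + M n * counterSpike M n +
      V n * (counterSpike M n ^ 2 - v n) :=
    not_le.1 fun h3 => realityDev_ne_zero_iff.2 ⟨h1, h2, h3⟩ hn
  rw [counterSpike_sq] at hcost
  linarith [mul_counterSpike_nonpos M n]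

theorem summable_of_eventually_realityDev_eq_zero (hv : ∀ n, 0 ≤ v n) (hV : ∀ n, 0 ≤ V n)
    (hK : ∀ n, 0 ≤ capitalU 0 v M V (realityDev v M V) n)
    (h : ∀ᶠ n in atTop, realityDev v M V n = 0) :
    Summable fun n => v n / ((n : ℝ) + 1) ^ 2 := by
  by_contra hns
  have hgap := eventually_sub_capitalU_lt_of_eventually_realityDev_eq_zero hv hns h
  refine hns (summable_of_gap (g := fun n => 1 - capitalU 0 v M V (realityDev v M V) n) (C := 1)
    hv hV (fun n => sub_nonneg.2 (capitalU_realityDev_le_one hv hV n))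
    (fun n => by linarith [hK n]) (h.mono fun n hn => ?_) hgap)
  simp only [capitalU_zero_succ, hn]
  ring

theorem half_le_abs_sum_range_div_of_spikeCond {n : ℕ}
    (h : SpikeCond v M V (realityDev v M V) n) :
    1 / 2 ≤ |(∑ k ∈ range (n + 1), realityDev v M V k) / ((n + 1 : ℕ) : ℝ)| := by
  have hn : (0 : ℝ) < (n : ℝ) + 1 := by positivity
  rw [sum_range_succ, realityDev_of_spikeCond h, abs_div, Nat.cast_succ, abs_of_pos hn,
    le_div_iff₀ hn]
  have := abs_add' (counterSpike M n) (∑ k ∈ range n, realityDev v M V k)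
  rw [abs_counterSpike] at this
  linarith [h.2.1]

theorem eventually_realityDev_eq_zero_of_tendsto
    (h : Tendsto (fun n => (∑ k ∈ range n, realityDev v M V k) / (n : ℝ)) atTop (nhds 0)) :
    ∀ᶠ n in atTop, realityDev v M V n = 0 := by
  filter_upwards [(h.comp (tendsto_add_atTop_nat 1)).abs.eventually_lt_const
    (by norm_num : |(0 : ℝ)| < 1 / 2)] with n hn
  by_contra hne
  exact not_lt.2 (half_le_abs_sum_range_div_of_spikeCond (realityDev_ne_zero_iff.1 hne)) hn

end realityDev

/-- In the unbounded forecasting game, Reality can strongly comply with: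
`∑ v n / n² < ∞  ↔  (1/n) ∑_{i ≤ n} (x i - m i) → 0`. -/
theorem stmt_7 :
    ∃ R : (ℕ → ℝ) → (ℕ → ℝ) → (ℕ → ℝ) → (ℕ → ℝ) → ℕ → ℝ,
      (∀ m m' v v' M M' V V' : ℕ → ℝ, ∀ n,
        (∀ k ≤ n, m k = m' k) → (∀ k ≤ n, v k = v' k) →
        (∀ k ≤ n, M k = M' k) → (∀ k ≤ n, V k = V' k) →
        R m v M V n = R m' v' M' V' n) ∧
      ∀ m v M V : ℕ → ℝ, (∀ n, 0 ≤ v n) → (∀ n, 0 ≤ V n) →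
        (∀ n, 0 ≤ capitalU m v M V (R m v M V) n) →
          ((Summable (fun n => v n / ((n : ℝ) + 1) ^ 2) ↔
            Tendsto (fun n => (∑ i ∈ Finset.range n, (R m v M V i - m i)) / (n : ℝ))
              atTop (nhds 0)) ∧
           ∀ n, capitalU m v M V (R m v M V) n ≤ 1) := by
  refine ⟨fun m v M V => m + realityDev v M V, fun m m' v v' M M' V V' n hm hv hM hV => ?_,
    fun m v M V hv hV hK => ?_⟩
  · simp only [Pi.add_apply, hm n le_rfl, realityDev_congr hv hM hV]
  · simp only [capitalU_eq_capitalU_zero_sub m, add_sub_cancel_left, Pi.add_apply] at hK ⊢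
    refine ⟨⟨fun hs => ?_, fun ht => ?_⟩, capitalU_realityDev_le_one hv hV⟩
    · exact tendsto_sum_range_div_of_eventually_eq_zero
        (eventually_realityDev_eq_zero_of_summable hv hs)
    · exact summable_of_eventually_realityDev_eq_zero hv hV hK
        (eventually_realityDev_eq_zero_of_tendsto ht)
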